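/- For every integer n ≥ 1 the q-Genocchi polynomials satisfy the linear homogeneous recurrence (1/(2q)) Σ_{k=0}^{n-2} [n choose k]_q g_{n-k,q} q^k G_{k,q}(x) + [n]_q (xq − 1/(2q)) q^{n-1} G_{n-1,q}(x) + q^{n-1} G_{n,q}(x) − [n]_q G_{n,q}(qx) = 0, as an identity of real polynomials in x (the sum is empty when n = 1). -/

import Mathlib

open Polynomial Finset

/-- The q-integer [n]_q = 1 + q + ... + q^(n-1). -/
noncomputable def qInt (q : ℝ) (n : ℕ) : ℝ := ∑ i ∈ Finset.range n, q ^ i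

/-- The q-factorial [n]_q! = [1]_q [2]_q ... [n]_q, with [0]_q! = 1. -/
noncomputable def qFact (q : ℝ) : ℕ → ℝ
  | 0 => 1
  | n + 1 => qFact q n * qInt q (n + 1)

/-- The q-binomial coefficient [n choose k]_q = [n]_q! / ([k]_q! [n-k]_q!). -/
noncomputable def qBinom (q : ℝ) (n k : ℕ) : ℝ := qFact q n / (qFact q k * qFact q (n - k))

/-- The q-derivative on real polynomials, determined by D_q(x^n) = [n]_q x^(n-1). -/
noncomputable def qDeriv (q : ℝ) (p : Polynomial ℝ) : Polynomial ℝ :=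
  p.sum fun n a => Polynomial.C (a * qInt q n) * Polynomial.X ^ (n - 1)

/-- The q-derivative on formal power series: `D_{q,t}(t^n) = [n]_q t^(n-1)`. -/
noncomputable def qDerivPS (q : ℝ) (f : PowerSeries ℝ) : PowerSeries ℝ :=
  PowerSeries.mk fun n => qInt q (n + 1) * PowerSeries.coeff (n + 1) f

/-- The q-exponential series `e_q(t) = Σ_{n≥0} t^n/[n]_q!`. -/
noncomputable def qExp (q : ℝ) : PowerSeries ℝ := PowerSeries.mk fun n => 1 / qFact q n

/-- The q-Genocchi polynomials `G_{n,q}(x) = Σ_{k=0}^n [n choose k]_q g_{k,q} x^(n-k)`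
attached to the q-Genocchi numbers (g_k). -/
noncomputable def qGenocchiPoly (q : ℝ) (g : ℕ → ℝ) (n : ℕ) : Polynomial ℝ :=
  ∑ k ∈ Finset.range (n + 1), Polynomial.C (qBinom q n k * g k) * Polynomial.X ^ (n - k)

/-! Let `F(t) = Σ gₙ tⁿ/[n]_q!`. Applying the q-derivative `D` to `(e_q + 1) F = 2t`, with
`D e_q = e_q` and the q-Leibniz rule `D(uv)(t) = u(qt) Dv(t) + Du(t) v(t)`, and multiplying by
`F(qt)` eliminates `e_q`: `2qt DF(t) + 2t F(qt) = 2F(qt) + F(t) F(qt)`. Its coefficients form a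
quadratic identity for `aₙ = gₙ/[n]_q!`. Since the coefficient of `x^m` in `G_{k,q}` is
`[k]_q!/[m]_q! · a_{k-m}`, the coefficient of `x^m` in the recurrence for `n = m + K + 1` is a
combination of that identity at `t^{K+1}` and of `[n]_q = [K+1]_q + q^{K+1} [m]_q`; for `m ≥ n`
all coefficients vanish because `g₀ = 0`. -/

lemma qInt_zero (q : ℝ) : qInt q 0 = 0 := by simp [qInt]

lemma qInt_add (q : ℝ) (a b : ℕ) : qInt q (a + b) = qInt q a + q ^ a * qInt q b := by
  simp [qInt, sum_range_add, mul_sum, pow_add]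

lemma qInt_pos {q : ℝ} (hq : 0 < q) {n : ℕ} (hn : 0 < n) : 0 < qInt q n :=
  sum_pos (fun i _ => pow_pos hq i) (nonempty_range_iff.2 hn.ne')

lemma qFact_one (q : ℝ) : qFact q 1 = 1 := by simp [qFact, qInt]

lemma qFact_succ (q : ℝ) (n : ℕ) : qFact q (n + 1) = qFact q n * qInt q (n + 1) := rfl

lemma qFact_pos {q : ℝ} (hq : 0 < q) (n : ℕ) : 0 < qFact q n := by
  induction n with
  | zero => exact one_pos
  | succ n ih => exact mul_pos ih (qInt_pos hq n.succ_pos)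

lemma qBinom_mul (q : ℝ) (n k : ℕ) (c : ℝ) :
    qBinom q n k * c = qFact q n / qFact q k * (c / qFact q (n - k)) := by
  rw [qBinom]; ring

section qDerivPS

variable (q : ℝ)

lemma coeff_qDerivPS (f : PowerSeries ℝ) (n : ℕ) :
    PowerSeries.coeff n (qDerivPS q f) = qInt q (n + 1) * PowerSeries.coeff (n + 1) f :=
  PowerSeries.coeff_mk _ _

lemma qDerivPS_add (u v : PowerSeries ℝ) : qDerivPS q (u + v) = qDerivPS q u + qDerivPS q v := by
  ext n; simp [coeff_qDerivPS, mul_add]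

lemma qDerivPS_C_mul_X (c : ℝ) :
    qDerivPS q (PowerSeries.C c * PowerSeries.X) = PowerSeries.C c := by
  ext n; rcases n with _ | n <;> simp [coeff_qDerivPS, qInt, PowerSeries.coeff_C]

lemma qDerivPS_one : qDerivPS q 1 = 0 := by
  ext n; simp [coeff_qDerivPS]

lemma qDerivPS_mul (u v : PowerSeries ℝ) :
    qDerivPS q (u * v) = PowerSeries.rescale q u * qDerivPS q v + qDerivPS q u * v := by
  ext n
  simp only [coeff_qDerivPS, map_add, PowerSeries.coeff_mul, PowerSeries.coeff_rescale]
  have hsplit : ∀ p ∈ antidiagonal (n + 1),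
      qInt q (n + 1) * (PowerSeries.coeff p.1 u * PowerSeries.coeff p.2 v)
        = q ^ p.1 * PowerSeries.coeff p.1 u * (qInt q p.2 * PowerSeries.coeff p.2 v)
          + qInt q p.1 * PowerSeries.coeff p.1 u * PowerSeries.coeff p.2 v := by
    intro p hp
    rw [← mem_antidiagonal.1 hp, qInt_add]
    ring
  rw [mul_sum, sum_congr rfl hsplit, sum_add_distrib, Nat.sum_antidiagonal_succ',
    Nat.sum_antidiagonal_succ (f := fun p => qInt q p.1 * _ * _)]
  simp [qInt_zero]

end qDerivPS

lemma qDerivPS_qExp {q : ℝ} (hq : 0 < q) : qDerivPS q (qExp q) = qExp q := by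
  ext n
  have := (qInt_pos hq n.succ_pos).ne'
  have := (qFact_pos hq n).ne'
  simp only [coeff_qDerivPS, qExp, PowerSeries.coeff_mk, qFact_succ]
  field_simp

lemma functional_eq_of_qExp_add_one_mul_eq {q : ℝ} (hq : 0 < q) {F : PowerSeries ℝ}
    (hF : (qExp q + 1) * F = 2 * PowerSeries.X) :
    2 * PowerSeries.C q * PowerSeries.X * qDerivPS q F
        + 2 * PowerSeries.X * PowerSeries.rescale q F
      = 2 * PowerSeries.rescale q F + F * PowerSeries.rescale q F := by
  have hD := congrArg (qDerivPS q) hF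
  rw [qDerivPS_mul, qDerivPS_add, qDerivPS_one, qDerivPS_qExp hq, add_zero, map_add, map_one,
    ← map_ofNat PowerSeries.C 2, qDerivPS_C_mul_X, map_ofNat] at hD
  have hR := congrArg (PowerSeries.rescale q) hF
  rw [map_mul, map_add, map_one, map_mul, PowerSeries.rescale_X, map_ofNat] at hR
  linear_combination PowerSeries.rescale q F * hD - qDerivPS q F * hR
    - PowerSeries.rescale q F * hF

section qGenocchiNumbers

variable {q : ℝ} {g : ℕ → ℝ}
  (hg : (qExp q + 1) * PowerSeries.mk (fun n => g n / qFact q n) = 2 * PowerSeries.X)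
include hg

lemma qGenocchi_zero : g 0 = 0 := by
  have := congrArg (PowerSeries.coeff 0) hg
  rw [PowerSeries.coeff_mul] at this
  simpa [qExp, qFact] using this

lemma qGenocchi_one : g 1 = 1 := by
  have := congrArg (PowerSeries.coeff 1) hg
  simp [PowerSeries.coeff_mul, Nat.sum_antidiagonal_succ, qExp, qFact, qInt,
    qGenocchi_zero hg, map_ofNat] at this
  linarith

lemma qGenocchi_convolution (hq : 0 < q) (K : ℕ) :
    ∑ j ∈ range K, q ^ j * (g j / qFact q j) * (g (K + 1 - j) / qFact q (K + 1 - j))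
        + 2 * q ^ (K + 1) * (g (K + 1) / qFact q (K + 1))
      = 2 * q * qInt q (K + 1) * (g (K + 1) / qFact q (K + 1)) + q ^ K * (g K / qFact q K) := by
  have h := congrArg (PowerSeries.coeff (K + 1)) (functional_eq_of_qExp_add_one_mul_eq hq hg)
  have h2 : (2 : PowerSeries ℝ) = PowerSeries.C 2 := (map_ofNat _ 2).symm
  simp only [mul_assoc, h2] at h
  simp only [map_add, PowerSeries.coeff_C_mul, PowerSeries.coeff_succ_X_mul] at h
  rw [PowerSeries.coeff_mul, ← Nat.sum_antidiagonal_swap,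
    Nat.sum_antidiagonal_eq_sum_range_succ_mk] at h
  simp only [coeff_qDerivPS, PowerSeries.coeff_rescale, PowerSeries.coeff_mk, sum_range_succ,
    Prod.swap_prod_mk, Nat.sub_self, Nat.add_sub_cancel_left, qGenocchi_zero hg,
    qGenocchi_one hg] at h
  have hF0 : qFact q 0 = 1 := rfl
  simp only [qFact_one, hF0, div_one, zero_mul, add_zero] at h
  rw [sum_congr rfl fun j _ => mul_comm _ _] at h
  linear_combination -h

end qGenocchiNumbers

section qGenocchiPoly

variable (q : ℝ) (g : ℕ → ℝ)

lemma coeff_qGenocchiPoly (k m : ℕ) :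
    (qGenocchiPoly q g k).coeff m = if m ≤ k then qBinom q k (k - m) * g (k - m) else 0 := by
  simp only [qGenocchiPoly, finsetSum_coeff, coeff_C_mul, coeff_X_pow]
  split_ifs with hm
  · rw [sum_eq_single (k - m)]
    · simp [Nat.sub_sub_self hm]
    · intro j hj hne
      rw [mem_range] at hj
      rw [if_neg (by omega), mul_zero]
    · simp
  · refine sum_eq_zero fun j hj => ?_
    rw [if_neg (by omega), mul_zero]

lemma coeff_qGenocchiPoly_of_le {k m : ℕ} (h : m ≤ k) :
    (qGenocchiPoly q g k).coeff m = qFact q k / qFact q m * (g (k - m) / qFact q (k - m)) := by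
  rw [coeff_qGenocchiPoly, if_pos h, qBinom, Nat.sub_sub_self h]
  ring

variable {q g}

lemma coeff_qGenocchiPoly_eq_zero (h0 : g 0 = 0) {k m : ℕ} (h : k ≤ m) :
    (qGenocchiPoly q g k).coeff m = 0 := by
  rw [coeff_qGenocchiPoly]
  split_ifs with hmk
  · rw [show k - m = 0 by omega, h0, mul_zero]
  · rfl

lemma coeff_X_mul_qGenocchiPoly (hq : 0 < q) {k m : ℕ} (h : m ≤ k + 1) :
    (X * qGenocchiPoly q g k).coeff m
      = qInt q m * qFact q k / qFact q m * (g (k + 1 - m) / qFact q (k + 1 - m)) := by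
  rcases m with _ | m
  · simp [qInt_zero]
  · have := (qInt_pos hq m.succ_pos).ne'
    have := (qFact_pos hq m).ne'
    rw [coeff_X_mul, coeff_qGenocchiPoly_of_le q g (by omega), qFact_succ,
      Nat.add_sub_add_right]
    field_simp

end qGenocchiPoly

lemma sum_qBinom_mul_coeff_qGenocchiPoly {q : ℝ} (hq : 0 < q) (g : ℕ → ℝ) (m K : ℕ) :
    ∑ k ∈ range (m + K), qBinom q (m + K + 1) k * g (m + K + 1 - k) * q ^ k
        * (qGenocchiPoly q g k).coeff m
      = qFact q (m + K + 1) / qFact q m * q ^ m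
        * ∑ j ∈ range K, q ^ j * (g j / qFact q j) * (g (K + 1 - j) / qFact q (K + 1 - j)) := by
  rw [sum_range_add, sum_eq_zero fun k hk => ?_, zero_add, mul_sum]
  · refine sum_congr rfl fun j hj => ?_
    have := (qFact_pos hq (m + j)).ne'
    rw [qBinom_mul, coeff_qGenocchiPoly_of_le q g (by omega), Nat.add_sub_cancel_left,
      show m + K + 1 - (m + j) = K + 1 - j by omega, pow_add]
    field_simp
  · rw [coeff_qGenocchiPoly, if_neg (by simp at hk; omega), mul_zero]

theorem qGenocchi_recurrence_general (q : ℝ) (hq0 : 0 < q)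
    (g : ℕ → ℝ)
    (hg : (qExp q + 1) * PowerSeries.mk (fun n => g n / qFact q n) = 2 * PowerSeries.X)
    (n : ℕ) :
    Polynomial.C (1 / (2 * q))
        * (∑ k ∈ Finset.range (n - 1),
            Polynomial.C (qBinom q n k * g (n - k) * q ^ k) * qGenocchiPoly q g k)
      + Polynomial.C (qInt q n)
          * (Polynomial.C q * Polynomial.X - Polynomial.C (1 / (2 * q)))
          * Polynomial.C (q ^ (n - 1)) * qGenocchiPoly q g (n - 1)
      + Polynomial.C (q ^ (n - 1)) * qGenocchiPoly q g n
      - Polynomial.C (qInt q n)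
          * (qGenocchiPoly q g n).comp (Polynomial.C q * Polynomial.X) = 0 := by
  have h0 := qGenocchi_zero hg
  have hmid : ∀ p : ℝ[X], C (qInt q n) * (C q * X - C (1 / (2 * q))) * C (q ^ (n - 1)) * p
      = C (qInt q n * q ^ (n - 1) * q) * (X * p)
        - C (qInt q n * q ^ (n - 1) * (1 / (2 * q))) * p := by
    intro p; simp only [map_mul]; ring
  ext m
  simp only [hmid, coeff_add, coeff_sub, coeff_C_mul, finsetSum_coeff, comp_C_mul_X_coeff,
    coeff_zero]
  rcases lt_or_ge m n with hmn | hnm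
  · obtain ⟨K, rfl⟩ : ∃ K, n = m + K + 1 := ⟨n - m - 1, by omega⟩
    rw [Nat.add_sub_cancel, sum_qBinom_mul_coeff_qGenocchiPoly hq0,
      coeff_X_mul_qGenocchiPoly hq0 (by omega), coeff_qGenocchiPoly_of_le q g (by omega),
      coeff_qGenocchiPoly_of_le q g (by omega), show m + K + 1 - m = K + 1 by omega,
      Nat.add_sub_cancel_left, qFact_succ q (m + K)]
    have hn : qInt q (m + K + 1) = qInt q (K + 1) + q ^ (K + 1) * qInt q m := by
      rw [show m + K + 1 = K + 1 + m by ring, qInt_add]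
    have hconv := qGenocchi_convolution hg hq0 K
    have := hq0.ne'
    linear_combination (norm := skip)
      qFact q (m + K) * qInt q (m + K + 1) / qFact q m * q ^ m / (2 * q) * hconv
        - qFact q (m + K) * qInt q (m + K + 1) / qFact q m * q ^ m
          * (g (K + 1) / qFact q (K + 1)) * hn
    field_simp
    ring
  · rcases m with _ | m <;>
      simp (disch := (try simp only [mem_range] at *); omega)
        [coeff_qGenocchiPoly_eq_zero h0, coeff_X_mul]

/-- The q-Genocchi polynomials satisfy the linear homogeneous recurrence
`(1/(2q)) Σ_{k=0}^{n-2} [n choose k]_q g_{n-k,q} q^k G_{k,q}(x)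
  + [n]_q (xq − 1/(2q)) q^(n-1) G_{n-1,q}(x) + q^(n-1) G_{n,q}(x) − [n]_q G_{n,q}(qx) = 0`
for n ≥ 1. -/
theorem qGenocchi_recurrence (q : ℝ) (hq0 : 0 < q) (hq1 : q < 1)
    (g : ℕ → ℝ)
    (hg : (qExp q + 1) * PowerSeries.mk (fun n => g n / qFact q n) = 2 * PowerSeries.X)
    (n : ℕ) (hn : 1 ≤ n) :
    Polynomial.C (1 / (2 * q))
        * (∑ k ∈ Finset.range (n - 1),
            Polynomial.C (qBinom q n k * g (n - k) * q ^ k) * qGenocchiPoly q g k)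
      + Polynomial.C (qInt q n)
          * (Polynomial.C q * Polynomial.X - Polynomial.C (1 / (2 * q)))
          * Polynomial.C (q ^ (n - 1)) * qGenocchiPoly q g (n - 1)
      + Polynomial.C (q ^ (n - 1)) * qGenocchiPoly q g n
      - Polynomial.C (qInt q n)
          * (qGenocchiPoly q g n).comp (Polynomial.C q * Polynomial.X) = 0 :=
  qGenocchi_recurrence_general q hq0 g hg n
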